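/- arXiv:0803.1060 — 4 statements merged into one kernel-verified Lean document; each statement's English description precedes it below -/
import Mathlib

section
/- Let γ be a C^4 lightlike curve in a pseudo-Riemannian vector space. Then the fourth-order Taylor expansion of the quadratic form gives ⟨γ(t+h) − γ(t), γ(t+h) − γ(t)⟩ = −(1/12)⟨γ''(t), γ''(t)⟩ h^4 + O(h^5) as h → 0. -/
/-!
Differentiating `⟨γ', γ'⟩ = 0` twice gives `⟨γ'', γ'⟩ = 0` and `⟨γ''', γ'⟩ + ⟨γ'', γ''⟩ = 0`.
Let `S h = h γ' + h²/2 γ'' + h³/6 γ'''` be the cubic Taylor polynomial of `γ(t + h) - γ(t)`,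
which it approximates up to `O(h⁴)`. By the two identities the `h²`, `h³` and `h⁴` coefficients
of `⟨S h, S h⟩` are `0`, `0` and `(1/4 - 1/3) ⟨γ'', γ''⟩`. Since both `S h` and
`γ(t + h) - γ(t)` are `O(h)`, swapping one for the other changes the quadratic form by `O(h⁵)`.
-/

open Asymptotics Filter Topology Finset

variable {E : Type*} [NormedAddCommGroup E] [NormedSpace ℝ E]

namespace ContinuousLinearMap

variable (B : E →L[ℝ] E →L[ℝ] ℝ)

theorem isBigO_apply₂ {α : Type*} {l : Filter α} {u v : α → E} {f g : α → ℝ}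
    (hu : u =O[l] f) (hv : v =O[l] g) :
    (fun x => B (u x) (v x)) =O[l] fun x => f x * g x :=
  B.isBoundedBilinearMap.isBigO_comp.trans (hu.norm_left.mul hv.norm_left)

theorem isBigO_apply_self_sub_apply_self {α : Type*} {l : Filter α} {u v : α → E}
    {f g : α → ℝ} (hu : u =O[l] f) (hv : v =O[l] f) (huv : (fun x => u x - v x) =O[l] g) :
    (fun x => B (u x) (u x) - B (v x) (v x)) =O[l] fun x => f x * g x := by
  refine ((B.isBigO_apply₂ hu huv).add ((B.isBigO_apply₂ huv hv).congr_right fun x =>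
    mul_comm _ _)).congr_left fun x => ?_
  simp only [map_sub, sub_apply]
  ring

theorem apply_deriv_add_eq_zero_of_forall_eq_zero {u v u' v' : ℝ → E}
    (hu : ∀ s, HasDerivAt u (u' s) s) (hv : ∀ s, HasDerivAt v (v' s) s)
    (h : ∀ s, B (u s) (v s) = 0) (s : ℝ) :
    B (u s) (v' s) + B (u' s) (v s) = 0 :=
  (B.hasDerivAt_of_bilinear (fun _ => hu s) fun _ => hv s).unique <|
    funext h ▸ hasDerivAt_const s 0

theorem apply_deriv_self_eq_zero_of_forall_eq_zero (hB : ∀ v w, B v w = B w v)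
    {u u' : ℝ → E} (hu : ∀ s, HasDerivAt u (u' s) s) (h : ∀ s, B (u s) (u s) = 0) (s : ℝ) :
    B (u' s) (u s) = 0 := by
  have := B.apply_deriv_add_eq_zero_of_forall_eq_zero hu hu h s
  rw [hB (u s)] at this
  linarith

end ContinuousLinearMap

theorem ContDiff.hasDerivAt_iteratedDeriv {f : ℝ → E} {n : ℕ} (hf : ContDiff ℝ (n + 1) f)
    (x : ℝ) : HasDerivAt (iteratedDeriv n f) (iteratedDeriv (n + 1) f x) x := by
  rw [iteratedDeriv_succ]
  exact (hf.differentiable_iteratedDeriv' n x).hasDerivAt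

theorem ContinuousLinearMap.iteratedDeriv_identities_of_isotropic_deriv
    (B : E →L[ℝ] E →L[ℝ] ℝ) (hB : ∀ v w, B v w = B w v) {γ : ℝ → E} (hγ : ContDiff ℝ 3 γ)
    (hiso : ∀ t, B (deriv γ t) (deriv γ t) = 0) (t : ℝ) :
    B (iteratedDeriv 2 γ t) (deriv γ t) = 0 ∧
      B (iteratedDeriv 2 γ t) (iteratedDeriv 2 γ t) + B (iteratedDeriv 3 γ t) (deriv γ t) = 0 := by
  have hd1 : ∀ s, HasDerivAt (deriv γ) (iteratedDeriv 2 γ s) s := by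
    simpa only [iteratedDeriv_one] using
      (hγ.of_le (by norm_num) : ContDiff ℝ (1 + 1) γ).hasDerivAt_iteratedDeriv
  have hd2 : ∀ s, HasDerivAt (iteratedDeriv 2 γ) (iteratedDeriv 3 γ s) s :=
    (hγ : ContDiff ℝ (2 + 1) γ).hasDerivAt_iteratedDeriv
  have hortho := B.apply_deriv_self_eq_zero_of_forall_eq_zero hB hd1 hiso
  exact ⟨hortho t, B.apply_deriv_add_eq_zero_of_forall_eq_zero hd2 hd1 hortho t⟩

theorem ContDiff.taylor_isBigO {f : ℝ → E} {n : ℕ} (hf : ContDiff ℝ (n + 1) f) (x : ℝ) :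
    (fun h => f (x + h) - ∑ k ∈ range (n + 1), (h ^ k / k.factorial) • iteratedDeriv k f x)
      =O[𝓝 0] fun h => h ^ (n + 1) := by
  have hshift : Tendsto (fun h : ℝ => x + h) (𝓝 0) (𝓝 x) := by
    simpa using (continuous_const_add x).tendsto 0
  have hrem : (fun h => f (x + h) - taylorWithinEval f (n + 1) Set.univ x (x + h))
      =O[𝓝 0] fun h => h ^ (n + 1) := by
    simpa [Function.comp_def] using ((taylor_isLittleO_univ hf).comp_tendsto hshift).isBigO
  have htop : (fun h : ℝ => (h ^ (n + 1) / (n + 1).factorial) • iteratedDeriv (n + 1) f x)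
      =O[𝓝 0] fun h => h ^ (n + 1) := by
    refine .of_bound (‖iteratedDeriv (n + 1) f x‖ / (n + 1).factorial) (.of_forall fun h => ?_)
    rw [norm_smul, norm_div, RCLike.norm_natCast]
    apply le_of_eq
    ring
  refine (hrem.add htop).congr_left fun h => ?_
  simp only [taylor_within_apply, iteratedDerivWithin_univ, sum_range_succ (n := n + 1),
    add_sub_cancel_left, inv_mul_eq_div]
  abel

theorem LinearMap.isBigO_apply_self_cubic_of_isotropic {M : Type*} [AddCommGroup M]
    [Module ℝ M] (B : M →ₗ[ℝ] M →ₗ[ℝ] ℝ) (hB : ∀ v w, B v w = B w v) {a b c : M}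
    (haa : B a a = 0) (hba : B b a = 0) (hbbca : B b b + B c a = 0) :
    (fun h : ℝ => B (h • a + (h ^ 2 / 2) • b + (h ^ 3 / 6) • c)
        (h • a + (h ^ 2 / 2) • b + (h ^ 3 / 6) • c) + 1 / 12 * B b b * h ^ 4)
      =O[𝓝 0] fun h => h ^ 5 := by
  have hexpand : ∀ h : ℝ, B (h • a + (h ^ 2 / 2) • b + (h ^ 3 / 6) • c)
        (h • a + (h ^ 2 / 2) • b + (h ^ 3 / 6) • c) + 1 / 12 * B b b * h ^ 4
      = B b c / 6 * h ^ 5 + B c c / 36 * h ^ 6 := fun h => by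
    simp only [map_add, map_smul, LinearMap.add_apply, LinearMap.smul_apply, smul_eq_mul]
    linear_combination h ^ 2 * haa + h ^ 3 * hba + h ^ 4 / 3 * hbbca
      + h ^ 3 / 2 * hB a b + h ^ 4 / 6 * hB a c + h ^ 5 / 12 * hB c b
  simp only [hexpand]
  exact ((isBigO_refl _ _).const_mul_left _).add
    ((isLittleO_pow_pow (by norm_num : 5 < 6)).isBigO.const_mul_left _)

theorem lightlike_taylor_fourth_order (m : ℕ)
    (B : (Fin m → ℝ) →ₗ[ℝ] (Fin m → ℝ) →ₗ[ℝ] ℝ)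
    (hB : ∀ v w, B v w = B w v)
    (γ : ℝ → Fin m → ℝ) (hγ : ContDiff ℝ 4 γ)
    (hlight : ∀ t, B (deriv γ t) (deriv γ t) = 0) :
    ∀ t, (fun h : ℝ => B (γ (t + h) - γ t) (γ (t + h) - γ t)
        + (1 / 12) * B (iteratedDeriv 2 γ t) (iteratedDeriv 2 γ t) * h ^ 4)
      =O[nhds (0 : ℝ)] (fun h : ℝ => h ^ 5) := by
  intro t
  let B' : (Fin m → ℝ) →L[ℝ] (Fin m → ℝ) →L[ℝ] ℝ :=
    LinearMap.toContinuousLinearMap (LinearMap.toContinuousLinearMap.toLinearMap ∘ₗ B)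
  obtain ⟨hba, hbbca⟩ :=
    B'.iteratedDeriv_identities_of_isotropic_deriv hB (hγ.of_le (by norm_num)) hlight t
  set S := fun h : ℝ => h • deriv γ t + (h ^ 2 / 2) • iteratedDeriv 2 γ t
    + (h ^ 3 / 6) • iteratedDeriv 3 γ t
  set Δ := fun h : ℝ => γ (t + h) - γ t
  have hΔ : Δ =O[𝓝 0] fun h => h ^ 1 :=
    ((hγ.of_le (by norm_num) : ContDiff ℝ (0 + 1) γ).taylor_isBigO t).congr_left fun h => by
      simp [Δ]
  have hR : (fun h => Δ h - S h) =O[𝓝 0] fun h => h ^ 4 :=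
    ((hγ : ContDiff ℝ (3 + 1) γ).taylor_isBigO t).congr_left fun h => by
      simp only [Δ, S, sum_range_succ, range_one, sum_singleton, Nat.factorial, iteratedDeriv_zero,
        iteratedDeriv_one, pow_zero, pow_one, Nat.cast_one, Nat.cast_ofNat, Nat.succ_eq_add_one,
        Nat.reduceAdd, Nat.reduceMul, zero_add, mul_one, div_one, div_self one_ne_zero, one_smul]
      abel
  have hS : S =O[𝓝 0] fun h => h ^ 1 :=
    (hΔ.sub (hR.trans (isLittleO_pow_pow (by norm_num : 1 < 4)).isBigO)).congr_left
      fun h => sub_sub_cancel _ _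
  refine ((B.isBigO_apply_self_cubic_of_isotropic hB (hlight t) hba hbbca).add
    ((B'.isBigO_apply_self_sub_apply_self hΔ hS hR).congr_right fun h => by ring)).congr_left
    fun h => ?_
  change _ + (B (Δ h) (Δ h) - B (S h) (S h)) = _
  ring
end

section
/- Let γ be a lightlike curve with two parametrizations γ(t) and γ(u), related by a C^2 change of variables u = u(t). Then ⟨d²γ/dt², d²γ/dt²⟩ = (du/dt)^4 ⟨d²γ/du², d²γ/du²⟩; consequently the 1-form |⟨γ'', γ''⟩|^{1/4} dt is independent of the parametrization up to sign. -/
/-!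
Differentiating `B(γ', γ') = 0` gives `B(γ', γ'') = 0`, so `γ'` is isotropic and orthogonal to
`γ''`. By the chain rule, `(γ ∘ u)'' = u'² γ''(u) + u'' γ'(u)`, and the term along `γ'` drops out
of `B((γ ∘ u)'', (γ ∘ u)'')`, leaving `u'⁴ B(γ'', γ'')`. Taking fourth roots of absolute values
gives the invariance of `|B(γ'', γ'')|^{1/4} dt`.
-/

theorem ContinuousLinearMap.apply_deriv_eq_zero_of_forall_apply_self_eq_zero
    {E : Type*} [NormedAddCommGroup E] [NormedSpace ℝ E] {B : E →L[ℝ] E →L[ℝ] ℝ}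
    (hB : ∀ v w, B v w = B w v) {f : ℝ → E} (hf : ∀ s, B (f s) (f s) = 0) {s : ℝ}
    (hfs : DifferentiableAt ℝ f s) :
    B (f s) (deriv f s) = 0 := by
  have hderiv : HasDerivAt (fun s ↦ B (f s) (f s)) (B (f s) (deriv f s) + B (deriv f s) (f s)) s :=
    B.hasDerivAt_of_bilinear (fun _ ↦ hfs.hasDerivAt) (fun _ ↦ hfs.hasDerivAt)
  have hzero : B (f s) (deriv f s) + B (deriv f s) (f s) = 0 :=
    hderiv.unique (by simpa only [hf] using hasDerivAt_const s (0 : ℝ))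
  rw [hB (deriv f s)] at hzero
  linarith

theorem LinearMap.apply_smul_add_smul_self_of_isotropic {R M : Type*} [CommRing R]
    [AddCommGroup M] [Module R M] (B : M →ₗ[R] M →ₗ[R] R) {v w : M}
    (hvv : B v v = 0) (hvw : B v w = 0) (hwv : B w v = 0) (a b : R) :
    B (a • w + b • v) (a • w + b • v) = a ^ 2 * B w w := by
  simp only [map_add, map_smul, LinearMap.add_apply, LinearMap.smul_apply, smul_eq_mul,
    hvv, hvw, hwv]
  ring

theorem Real.abs_pow_mul_rpow_one_div {n : ℕ} (hn : n ≠ 0) (a x : ℝ) :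
    |a ^ n * x| ^ ((1 : ℝ) / n) = |a| * |x| ^ ((1 : ℝ) / n) := by
  rw [abs_mul, abs_pow, Real.mul_rpow (by positivity) (abs_nonneg x), one_div,
    Real.pow_rpow_inv_natCast (abs_nonneg a) hn]

theorem lightlike_reparametrization_invariance (m : ℕ)
    (B : (Fin m → ℝ) →ₗ[ℝ] (Fin m → ℝ) →ₗ[ℝ] ℝ)
    (hB : ∀ v w, B v w = B w v)
    (γ : ℝ → Fin m → ℝ) (hγ : ContDiff ℝ 2 γ)
    (u : ℝ → ℝ) (hu : ContDiff ℝ 2 u)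
    (hlight : ∀ s, B (deriv γ s) (deriv γ s) = 0) :
    ∀ t, B (iteratedDeriv 2 (γ ∘ u) t) (iteratedDeriv 2 (γ ∘ u) t)
        = (deriv u t) ^ 4 * B (iteratedDeriv 2 γ (u t)) (iteratedDeriv 2 γ (u t)) ∧
      |B (iteratedDeriv 2 (γ ∘ u) t) (iteratedDeriv 2 (γ ∘ u) t)| ^ ((1 : ℝ) / 4)
        = |deriv u t| * |B (iteratedDeriv 2 γ (u t)) (iteratedDeriv 2 γ (u t))| ^ ((1 : ℝ) / 4) := by
  have hγ' : Differentiable ℝ (deriv γ) :=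
    iteratedDeriv_one (f := γ) ▸ hγ.differentiable_iteratedDeriv 1 (by norm_num)
  have hortho : ∀ s, B (deriv γ s) (iteratedDeriv 2 γ s) = 0 := fun s ↦ by
    rw [iteratedDeriv_succ, iteratedDeriv_one]
    exact B.toContinuousBilinearMap.apply_deriv_eq_zero_of_forall_apply_self_eq_zero hB hlight
      (hγ' s)
  intro t
  have hquartic : B (iteratedDeriv 2 (γ ∘ u) t) (iteratedDeriv 2 (γ ∘ u) t)
      = (deriv u t) ^ 4 * B (iteratedDeriv 2 γ (u t)) (iteratedDeriv 2 γ (u t)) := by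
    rw [iteratedDeriv_scomp_two hγ.contDiffAt hu.contDiffAt,
      B.apply_smul_add_smul_self_of_isotropic (hlight (u t)) (hortho (u t))
        ((hB _ _).trans (hortho (u t)))]
    ring
  exact ⟨hquartic, hquartic ▸ Real.abs_pow_mul_rpow_one_div four_ne_zero _ _⟩
end

section
/- Let m̄ : I → ℝ₁^5 be a C^3 curve in the light cone with ⟨m̄', m̄'⟩ ≡ 1, and γ(s) = m̄(s) ∧ m̄'(s) ∧ m̄''(s). Then γ'(s) = m̄(s) ∧ m̄'(s) ∧ m̄'''(s), and ⟨γ'(s), γ'(s)⟩ = 0; that is, the curve of osculating circles γ is lightlike in Λ³ℝ₁^5. -/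
/-- The Minkowski form on ℝ₁⁵. -/
noncomputable def mink (x y : Fin 5 → ℝ) : ℝ :=
  -(x 0 * y 0) + x 1 * y 1 + x 2 * y 2 + x 3 * y 3 + x 4 * y 4

/-- The induced form on Λ³ℝ₁⁵ on pure 3-vectors. -/
noncomputable def tripleForm (x₁ x₂ x₃ y₁ y₂ y₃ : Fin 5 → ℝ) : ℝ :=
  - Matrix.det (Matrix.of fun i j : Fin 3 => mink (![x₁, x₂, x₃] i) (![y₁, y₂, y₃] j))

/-- Plücker coordinate p_{i₁i₂i₃} of the 3-vector x₁∧x₂∧x₃. -/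
noncomputable def plucker (x₁ x₂ x₃ : Fin 5 → ℝ) (i₁ i₂ i₃ : Fin 5) : ℝ :=
  Matrix.det (Matrix.of fun a b : Fin 3 => ![x₁, x₂, x₃] a (![i₁, i₂, i₃] b))


/-!
Differentiating the constraints `⟨m̄, m̄⟩ = 0` and `⟨m̄', m̄'⟩ = 1` along the curve gives
`⟨m̄, m̄'⟩ = 0`, `⟨m̄, m̄''⟩ = -1`, `⟨m̄', m̄''⟩ = 0` and finally `⟨m̄, m̄'''⟩ = 0`.
By the Leibniz rule `γ'` is a sum of three wedge products, two of which have a repeated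
factor, so `γ' = m̄ ∧ m̄' ∧ m̄'''`. Its square is minus the Gram determinant of
`(m̄, m̄', m̄''')`, whose first row vanishes.
-/

lemma mink_comm (x y : Fin 5 → ℝ) : mink x y = mink y x := by
  unfold mink; ring

lemma HasDerivAt.mink {f g : ℝ → Fin 5 → ℝ} {f' g' : Fin 5 → ℝ} {s : ℝ}
    (hf : HasDerivAt f f' s) (hg : HasDerivAt g g' s) :
    HasDerivAt (fun t => _root_.mink (f t) (g t))
      (_root_.mink f' (g s) + _root_.mink (f s) g') s := by
  rw [hasDerivAt_pi] at hf hg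
  unfold _root_.mink
  refine (((((hf 0).fun_mul (hg 0)).fun_neg.fun_add ((hf 1).fun_mul (hg 1))).fun_add
    ((hf 2).fun_mul (hg 2))).fun_add ((hf 3).fun_mul (hg 3))).fun_add ((hf 4).fun_mul (hg 4))
    |>.congr_deriv (by ring)

lemma mink_add_mink_eq_zero_of_forall_mink_eq {f g : ℝ → Fin 5 → ℝ} {f' g' : Fin 5 → ℝ}
    {s c : ℝ} (hf : HasDerivAt f f' s) (hg : HasDerivAt g g' s)
    (hc : ∀ t, mink (f t) (g t) = c) :
    mink f' (g s) + mink (f s) g' = 0 :=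
  (hf.mink hg).unique (by simpa only [hc] using hasDerivAt_const s c)

section LightConeCurve

variable {m m₁ m₂ m₃ : ℝ → Fin 5 → ℝ}

lemma mink_position_velocity_eq_zero (h₀ : ∀ t, HasDerivAt m (m₁ t) t)
    (hcone : ∀ t, mink (m t) (m t) = 0) (t : ℝ) : mink (m t) (m₁ t) = 0 := by
  have h := mink_add_mink_eq_zero_of_forall_mink_eq (h₀ t) (h₀ t) hcone
  rw [mink_comm (m₁ t)] at h
  linarith

lemma mink_position_acceleration_eq_neg_one (h₀ : ∀ t, HasDerivAt m (m₁ t) t)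
    (h₁ : ∀ t, HasDerivAt m₁ (m₂ t) t) (hcone : ∀ t, mink (m t) (m t) = 0)
    (hunit : ∀ t, mink (m₁ t) (m₁ t) = 1) (t : ℝ) : mink (m t) (m₂ t) = -1 := by
  have h := mink_add_mink_eq_zero_of_forall_mink_eq (h₀ t) (h₁ t)
    (mink_position_velocity_eq_zero h₀ hcone)
  linarith [hunit t]

lemma mink_velocity_acceleration_eq_zero (h₁ : ∀ t, HasDerivAt m₁ (m₂ t) t)
    (hunit : ∀ t, mink (m₁ t) (m₁ t) = 1) (t : ℝ) : mink (m₁ t) (m₂ t) = 0 := by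
  have h := mink_add_mink_eq_zero_of_forall_mink_eq (h₁ t) (h₁ t) hunit
  rw [mink_comm (m₂ t)] at h
  linarith

lemma mink_position_jerk_eq_zero (h₀ : ∀ t, HasDerivAt m (m₁ t) t)
    (h₁ : ∀ t, HasDerivAt m₁ (m₂ t) t) (h₂ : ∀ t, HasDerivAt m₂ (m₃ t) t)
    (hcone : ∀ t, mink (m t) (m t) = 0) (hunit : ∀ t, mink (m₁ t) (m₁ t) = 1) (t : ℝ) :
    mink (m t) (m₃ t) = 0 := by
  have h := mink_add_mink_eq_zero_of_forall_mink_eq (h₀ t) (h₂ t)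
    (mink_position_acceleration_eq_neg_one h₀ h₁ hcone hunit)
  linarith [mink_velocity_acceleration_eq_zero h₁ hunit t]

end LightConeCurve

lemma plucker_self_left (x y : Fin 5 → ℝ) (i₁ i₂ i₃ : Fin 5) :
    plucker x x y i₁ i₂ i₃ = 0 :=
  Matrix.det_zero_of_row_eq (i := 0) (j := 1) (by decide) rfl

lemma plucker_self_right (x y : Fin 5 → ℝ) (i₁ i₂ i₃ : Fin 5) :
    plucker x y y i₁ i₂ i₃ = 0 :=
  Matrix.det_zero_of_row_eq (i := 1) (j := 2) (by decide) rfl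

lemma HasDerivAt.plucker {x₁ x₂ x₃ : ℝ → Fin 5 → ℝ} {x₁' x₂' x₃' : Fin 5 → ℝ} {s : ℝ}
    (h₁ : HasDerivAt x₁ x₁' s) (h₂ : HasDerivAt x₂ x₂' s) (h₃ : HasDerivAt x₃ x₃' s)
    (i₁ i₂ i₃ : Fin 5) :
    HasDerivAt (fun t => _root_.plucker (x₁ t) (x₂ t) (x₃ t) i₁ i₂ i₃)
      (_root_.plucker x₁' (x₂ s) (x₃ s) i₁ i₂ i₃ + _root_.plucker (x₁ s) x₂' (x₃ s) i₁ i₂ i₃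
        + _root_.plucker (x₁ s) (x₂ s) x₃' i₁ i₂ i₃) s := by
  rw [hasDerivAt_pi] at h₁ h₂ h₃
  simp only [_root_.plucker, Matrix.det_fin_three, Matrix.of_apply, Matrix.cons_val_zero,
    Matrix.cons_val_one, Matrix.cons_val_two, Matrix.head_cons, Matrix.tail_cons]
  refine (((((((h₁ i₁).fun_mul (h₂ i₂)).fun_mul (h₃ i₃)).fun_sub
    (((h₁ i₁).fun_mul (h₂ i₃)).fun_mul (h₃ i₂))).fun_sub
    (((h₁ i₂).fun_mul (h₂ i₁)).fun_mul (h₃ i₃))).fun_add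
    (((h₁ i₂).fun_mul (h₂ i₃)).fun_mul (h₃ i₁))).fun_add
    (((h₁ i₃).fun_mul (h₂ i₁)).fun_mul (h₃ i₂))).fun_sub
    (((h₁ i₃).fun_mul (h₂ i₂)).fun_mul (h₃ i₁)) |>.congr_deriv (by ring)

lemma tripleForm_eq_zero_of_mink_eq_zero {x₁ x₂ x₃ y₁ y₂ y₃ : Fin 5 → ℝ}
    (h₁ : mink x₁ y₁ = 0) (h₂ : mink x₁ y₂ = 0) (h₃ : mink x₁ y₃ = 0) :
    tripleForm x₁ x₂ x₃ y₁ y₂ y₃ = 0 := by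
  rw [tripleForm, neg_eq_zero]
  refine Matrix.det_eq_zero_of_row_eq_zero 0 fun j => ?_
  fin_cases j <;> assumption

lemma hasDerivAt_iteratedDeriv {𝕜 F : Type*} [NontriviallyNormedField 𝕜]
    [NormedAddCommGroup F] [NormedSpace 𝕜 F] {f : 𝕜 → F} {n : WithTop ℕ∞} {k : ℕ}
    (hf : ContDiff 𝕜 n f) (hk : k < n) (t : 𝕜) :
    HasDerivAt (iteratedDeriv k f) (iteratedDeriv (k + 1) f t) t := by
  rw [iteratedDeriv_succ]
  exact (hf.differentiable_iteratedDeriv k hk t).hasDerivAt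

theorem osculating_circle_curve_lightlike (mb : ℝ → Fin 5 → ℝ)
    (hmb : ContDiff ℝ 3 mb)
    (hcone : ∀ s, mink (mb s) (mb s) = 0)
    (hunit : ∀ s, mink (deriv mb s) (deriv mb s) = 1) :
    ∀ s, (∀ i₁ i₂ i₃ : Fin 5,
        deriv (fun t => plucker (mb t) (deriv mb t) (iteratedDeriv 2 mb t) i₁ i₂ i₃) s
          = plucker (mb s) (deriv mb s) (iteratedDeriv 3 mb s) i₁ i₂ i₃) ∧
      tripleForm (mb s) (deriv mb s) (iteratedDeriv 3 mb s)
        (mb s) (deriv mb s) (iteratedDeriv 3 mb s) = 0 := by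
  have h₀ : ∀ t, HasDerivAt mb (deriv mb t) t := fun t => by
    simpa only [zero_add, iteratedDeriv_zero, iteratedDeriv_one] using
      hasDerivAt_iteratedDeriv (k := 0) hmb (by norm_num) t
  have h₁ : ∀ t, HasDerivAt (deriv mb) (iteratedDeriv 2 mb t) t := fun t => by
    simpa only [iteratedDeriv_one] using hasDerivAt_iteratedDeriv (k := 1) hmb (by norm_num) t
  have h₂ : ∀ t, HasDerivAt (iteratedDeriv 2 mb) (iteratedDeriv 3 mb t) t :=
    hasDerivAt_iteratedDeriv hmb (by norm_num)
  intro s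
  refine ⟨fun i₁ i₂ i₃ => ?_, ?_⟩
  · rw [((h₀ s).plucker (h₁ s) (h₂ s) i₁ i₂ i₃).deriv, plucker_self_left, plucker_self_right,
      zero_add, zero_add]
  · exact tripleForm_eq_zero_of_mink_eq_zero (hcone s) (mink_position_velocity_eq_zero h₀ hcone s)
      (mink_position_jerk_eq_zero h₀ h₁ h₂ hcone hunit s)
end

section
/- Let a₁ = (a,b,c) and a₂ = (d,e,f) be vectors in ℝ³ equipped with the Lorentz form ⟨(x₀,x₁,x₂),(y₀,y₁,y₂)⟩ = −x₀y₀ + x₁y₁ + x₂y₂. Then the system of equations −a² − d² + b² + c² + e² + f² = 0, bd − ae = 0, −cd + af = 0, ce − bf = 0 holds if and only if ⟨a₁,a₁⟩ = ⟨a₂,a₂⟩ = ⟨a₁,a₂⟩ = 0. -/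
/-!
The three bilinear equations say that the cross product `a₁ × a₂` vanishes, i.e. that `a₁` and
`a₂` are parallel. Both directions follow from the Lorentzian Lagrange identity
`⟨a₁ × a₂, a₁ × a₂⟩ = ⟨a₁, a₂⟩² - ⟨a₁, a₁⟩⟨a₂, a₂⟩`. If the cross product vanishes and
`⟨a₁, a₁⟩ = -⟨a₂, a₂⟩`, it gives `⟨a₁, a₂⟩² + ⟨a₁, a₁⟩² = 0`. Conversely, for two orthogonal
null vectors the spatial component of `a₁ × a₂` vanishes by the Euclidean Lagrange identity in
the plane, and then the identity forces the other two components to vanish as well.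
-/

/-- The Lorentz form on ℝ₁³: ⟨x,y⟩ = -x₀y₀ + x₁y₁ + x₂y₂. -/
noncomputable def lor (x y : Fin 3 → ℝ) : ℝ :=
  -(x 0 * y 0) + x 1 * y 1 + x 2 * y 2

open Matrix

theorem lor_cross_self (x y : Fin 3 → ℝ) :
    lor (x ⨯₃ y) (x ⨯₃ y) = lor x y ^ 2 - lor x x * lor y y := by
  simp only [lor, cross_apply, cons_val_zero, cons_val_one, cons_val_two, head_cons, tail_cons]
  ring

theorem lor_eq_zero_of_cross_eq_zero {x y : Fin 3 → ℝ} (hxy : x ⨯₃ y = 0)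
    (hsum : lor x x + lor y y = 0) : lor x x = 0 ∧ lor y y = 0 ∧ lor x y = 0 := by
  have h := lor_cross_self x y
  rw [hxy, show lor 0 0 = 0 by simp [lor]] at h
  have hsq : lor x y ^ 2 + lor x x ^ 2 = 0 := by linear_combination -h + lor x x * hsum
  have hxx : lor x x = 0 := by nlinarith [sq_nonneg (lor x y)]
  have hxy' : lor x y = 0 := by nlinarith [sq_nonneg (lor x x)]
  exact ⟨hxx, by linarith, hxy'⟩

theorem cross_eq_zero_of_lor_eq_zero {x y : Fin 3 → ℝ} (hx : lor x x = 0) (hy : lor y y = 0)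
    (hxy : lor x y = 0) : x ⨯₃ y = 0 := by
  have h := lor_cross_self x y
  rw [hx, hy, hxy] at h
  unfold lor at h hx hy hxy
  -- `(x₁y₂ - x₂y₁)² = (x₁² + x₂²)(y₁² + y₂²) - (x₁y₁ + x₂y₂)²`, and for orthogonal null vectors
  -- the right side is `x₀²y₀² - (x₀y₀)² = 0`.
  have h0 : (x ⨯₃ y) 0 = 0 := by
    refine pow_eq_zero_iff two_ne_zero |>.mp ?_
    simp only [cross_apply, cons_val_zero]
    linear_combination (y 1 ^ 2 + y 2 ^ 2) * hx + x 0 ^ 2 * hy -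
      (x 1 * y 1 + x 2 * y 2 + x 0 * y 0) * hxy
  have h12 : (x ⨯₃ y) 1 ^ 2 + (x ⨯₃ y) 2 ^ 2 = 0 := by
    rw [h0] at h
    linear_combination h
  obtain ⟨h1, h2⟩ := (add_eq_zero_iff_of_nonneg (sq_nonneg _) (sq_nonneg _)).mp h12
  ext i
  fin_cases i
  exacts [h0, pow_eq_zero_iff two_ne_zero |>.mp h1, pow_eq_zero_iff two_ne_zero |>.mp h2]

theorem lor_add_eq_zero_and_cross_eq_zero_iff {x y : Fin 3 → ℝ} :
    lor x x + lor y y = 0 ∧ x ⨯₃ y = 0 ↔ lor x x = 0 ∧ lor y y = 0 ∧ lor x y = 0 :=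
  ⟨fun ⟨hs, hc⟩ => lor_eq_zero_of_cross_eq_zero hc hs,
    fun ⟨hx, hy, hxy⟩ => ⟨by rw [hx, hy, add_zero], cross_eq_zero_of_lor_eq_zero hx hy hxy⟩⟩

theorem burstall_condition (a b c d e f : ℝ) :
    (-a ^ 2 - d ^ 2 + b ^ 2 + c ^ 2 + e ^ 2 + f ^ 2 = 0 ∧
      b * d - a * e = 0 ∧ -(c * d) + a * f = 0 ∧ c * e - b * f = 0)
    ↔ (lor ![a, b, c] ![a, b, c] = 0 ∧ lor ![d, e, f] ![d, e, f] = 0 ∧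
        lor ![a, b, c] ![d, e, f] = 0) := by
  have hsum : lor ![a, b, c] ![a, b, c] + lor ![d, e, f] ![d, e, f] =
      -a ^ 2 - d ^ 2 + b ^ 2 + c ^ 2 + e ^ 2 + f ^ 2 := by
    simp only [lor, cons_val_zero, cons_val_one, cons_val_two, head_cons, tail_cons]
    ring
  have hcross : ![a, b, c] ⨯₃ ![d, e, f] = 0 ↔
      (b * d - a * e = 0 ∧ -(c * d) + a * f = 0 ∧ c * e - b * f = 0) := by
    simp only [cross_apply, cons_val_zero, cons_val_one, cons_val_two, head_cons, tail_cons,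
      cons_eq_zero_iff, zero_empty, and_true]
    constructor <;> rintro ⟨h₁, h₂, h₃⟩ <;> refine ⟨?_, ?_, ?_⟩ <;> linarith
  rw [← hsum, ← hcross]
  exact lor_add_eq_zero_and_cross_eq_zero_iff
end
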